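/- Let A be a bounded operator on H with range R(A) dense, f ∈ R(A), ‖f_δ − f‖ ≤ δ, ‖f_δ‖ > Cδ with 1 < C < 2, Q = AA*. Define h(a,δ)² = ‖(Q(Q+aI)^{-1} − I) f_δ‖². Then h(a,δ) is continuous and monotone increasing in a > 0, lim_{a→∞} h(a,δ) = ‖f_δ‖ > Cδ, and lim_{a→0+} h(a,δ) = ‖P_{N(A*)} f_δ‖ ≤ δ < Cδ; hence the equation h(a,δ) = Cδ has a unique solution a(δ) > 0. -/

import Mathlib

/-!
Write `r_a = a (Q + a)⁻¹ = 1 - Q (Q + a)⁻¹`, so that `h(a) = ‖r_a f_δ‖`. Since `Q = A A*` is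
positive, `a ‖u‖ ≤ ‖(Q + a) u‖`, hence `‖r_a‖ ≤ 1`. As `a → ∞`, `r_a x → x` because
`‖Q (Q + a)⁻¹ x‖ ≤ ‖Q‖ ‖x‖ / a`. As `a → 0⁺`, `r_a x → P x`: `r_a` fixes `ker Q = N(A*)`, and
`r_a (Q w) = a (w - r_a w) → 0` on the range of `Q`, which is dense in `(ker Q)ᗮ`.
For `a < b` and `w = (Q + a)⁻¹ (Q + b)⁻¹ f_δ` one has `r_a f_δ = a (Q + b) w` and
`r_b f_δ = b (Q + a) w`, so `‖r_b f_δ‖² - ‖r_a f_δ‖² = (b² - a²) ‖Q w‖² + 2ab (b - a) re ⟪Q w, w⟫`,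
which is positive unless `Q f_δ = 0`; that would force `‖f_δ‖ = ‖P f_δ‖ = ‖P (f_δ - f)‖ ≤ δ`,
as `f ∈ R(A) ⊥ N(A*)`.
The intermediate value theorem then yields the unique root of `h(a) = Cδ`.
-/

open ContinuousLinearMap Filter Topology Set

lemma tendsto_apply_zero_of_mem_closure {𝕜 E F ι : Type*} [NontriviallyNormedField 𝕜]
    [SeminormedAddCommGroup E] [NormedSpace 𝕜 E] [SeminormedAddCommGroup F] [NormedSpace 𝕜 F]
    {T : ι → E →L[𝕜] F} {l : Filter ι} {s : Set E} {x : E} (hT : ∀ᶠ i in l, ‖T i‖ ≤ 1)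
    (hs : ∀ z ∈ s, Tendsto (fun i => T i z) l (𝓝 0)) (hx : x ∈ closure s) :
    Tendsto (fun i => T i x) l (𝓝 0) := by
  rw [Metric.tendsto_nhds]
  intro ε hε
  obtain ⟨z, hz, hxz⟩ := Metric.mem_closure_iff.mp hx (ε / 2) (half_pos hε)
  filter_upwards [hT, Metric.tendsto_nhds.mp (hs z hz) (ε / 2) (half_pos hε)] with i hTi hzi
  rw [dist_zero_right] at hzi ⊢
  rw [dist_eq_norm] at hxz
  calc ‖T i x‖ = ‖T i (x - z) + T i z‖ := by rw [← map_add, sub_add_cancel]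
    _ ≤ ‖T i‖ * ‖x - z‖ + ‖T i z‖ := (norm_add_le _ _).trans (by gcongr; exact le_opNorm _ _)
    _ < 1 * (ε / 2) + ε / 2 :=
        add_lt_add_of_le_of_lt (mul_le_mul hTi hxz.le (norm_nonneg _) zero_le_one) hzi
    _ = ε := by ring

lemma existsUnique_pos_eq_of_strictMonoOn {g : ℝ → ℝ} {l₀ l₁ c : ℝ}
    (hcont : ContinuousOn g (Ioi 0)) (hmono : StrictMonoOn g (Ioi 0))
    (h₀ : Tendsto g (𝓝[>] 0) (𝓝 l₀)) (h₁ : Tendsto g atTop (𝓝 l₁)) (hc : c ∈ Ioo l₀ l₁) :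
    ∃! a, 0 < a ∧ g a = c := by
  obtain ⟨a, ha, hga⟩ := isPreconnected_Ioi.intermediate_value_Ioo (l₁ := 𝓝[>] 0) inf_le_right
    (le_principal_iff.mpr (Ioi_mem_atTop 0)) hcont h₀ h₁ hc
  exact ⟨a, ⟨ha, hga⟩, fun b ⟨hb, hgb⟩ => hmono.injOn hb ha (hgb.trans hga.symm)⟩

lemma ContinuousLinearMap.norm_starProjection_le_norm_sub_apply {E F : Type*}
    [NormedAddCommGroup E] [InnerProductSpace ℂ E] [CompleteSpace E]
    [NormedAddCommGroup F] [InnerProductSpace ℂ F] [CompleteSpace F]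
    (A : E →L[ℂ] F) {K : Submodule ℂ F} [K.HasOrthogonalProjection] (hK : K ≤ (adjoint A).ker)
    (g : F) (y : E) : ‖K.starProjection g‖ ≤ ‖g - A y‖ := by
  have hAy : A y ∈ Kᗮ := by
    refine Submodule.orthogonal_le hK ?_
    rw [← orthogonal_range]
    exact Submodule.le_orthogonal_orthogonal _ ⟨y, rfl⟩
  calc ‖K.starProjection g‖ = ‖K.starProjection (g - A y)‖ := by
        rw [map_sub, K.starProjection_apply_eq_zero_iff.mpr hAy, sub_zero]
    _ ≤ ‖g - A y‖ := K.norm_starProjection_apply_le _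

section Tikhonov

variable {H : Type*} [NormedAddCommGroup H] [InnerProductSpace ℂ H]

/-- `Ring.inverse` is `0` at non-units, so this is only meaningful where `Q + a` is invertible. -/
noncomputable def tikhonovResidual (Q : H →L[ℂ] H) (a : ℝ) : H →L[ℂ] H :=
  (a : ℂ) • Ring.inverse (Q + (a : ℂ) • 1)

lemma ContinuousLinearMap.norm_add_smul_one_apply_sq (Q : H →L[ℂ] H) (d : ℝ) (w : H) :
    ‖(Q + (d : ℂ) • 1) w‖ ^ 2
      = ‖Q w‖ ^ 2 + 2 * d * (inner ℂ (Q w) w).re + d ^ 2 * ‖w‖ ^ 2 := by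
  rw [add_apply, smul_apply, one_apply_eq_self, @norm_add_sq ℂ, inner_smul_right, norm_smul]
  simp only [Complex.norm_real, Real.norm_eq_abs, RCLike.re_to_complex, Complex.re_ofReal_mul,
    mul_pow, sq_abs]
  ring

lemma norm_tikhonovResidual_apply {Q : H →L[ℂ] H} {a : ℝ} (ha : 0 ≤ a) (x : H) :
    ‖tikhonovResidual Q a x‖ = a * ‖Ring.inverse (Q + (a : ℂ) • 1) x‖ := by
  rw [tikhonovResidual, smul_apply, norm_smul, Complex.norm_real, Real.norm_of_nonneg ha]

namespace ContinuousLinearMap.IsPositive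

variable {Q : H →L[ℂ] H} (hQ : Q.IsPositive) {a : ℝ}
include hQ

lemma mul_norm_sq_le_re_inner (a : ℝ) (x : H) :
    a * ‖x‖ ^ 2 ≤ (inner ℂ ((Q + (a : ℂ) • 1) x) x).re := by
  have hx : (inner ℂ x x).re = ‖x‖ ^ 2 := inner_self_eq_norm_sq (𝕜 := ℂ) x
  rw [add_apply, smul_apply, one_apply_eq_self, inner_add_left, inner_smul_left, Complex.add_re,
    Complex.conj_ofReal, Complex.re_ofReal_mul, hx]
  have hQx : 0 ≤ (inner ℂ (Q x) x).re := hQ.re_inner_nonneg_left x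
  linarith

lemma mul_norm_le_norm_add_smul_one_apply (a : ℝ) (x : H) :
    a * ‖x‖ ≤ ‖(Q + (a : ℂ) • 1) x‖ := by
  rcases (norm_nonneg x).eq_or_lt with hx | hx
  · rw [← hx, mul_zero]; exact norm_nonneg _
  refine le_of_mul_le_mul_right ?_ hx
  calc a * ‖x‖ * ‖x‖ = a * ‖x‖ ^ 2 := by ring
    _ ≤ _ := hQ.mul_norm_sq_le_re_inner a x
    _ ≤ _ := by exact re_inner_le_norm (𝕜 := ℂ) _ _

lemma isUnit_add_smul_one [CompleteSpace H] (ha : 0 < a) : IsUnit (Q + (a : ℂ) • 1) := by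
  refine isUnit_of_forall_le_norm_inner_map _ (c := ⟨a, ha.le⟩) ha fun x => ?_
  calc ‖x‖ ^ 2 * a = a * ‖x‖ ^ 2 := mul_comm _ _
    _ ≤ _ := hQ.mul_norm_sq_le_re_inner a x
    _ ≤ _ := Complex.re_le_norm _

variable [CompleteSpace H]

lemma add_smul_one_apply_inverse_apply (ha : 0 < a) (x : H) :
    (Q + (a : ℂ) • 1) (Ring.inverse (Q + (a : ℂ) • 1) x) = x :=
  congr($(Ring.mul_inverse_cancel _ (hQ.isUnit_add_smul_one ha)) x)

lemma inverse_apply_add_smul_one_apply (ha : 0 < a) (x : H) :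
    Ring.inverse (Q + (a : ℂ) • 1) ((Q + (a : ℂ) • 1) x) = x :=
  congr($(Ring.inverse_mul_cancel _ (hQ.isUnit_add_smul_one ha)) x)

lemma one_sub_comp_inverse (ha : 0 < a) :
    1 - Q ∘L Ring.inverse (Q + (a : ℂ) • 1) = tikhonovResidual Q a := by
  ext x
  have := hQ.add_smul_one_apply_inverse_apply ha x
  rw [add_apply, smul_apply, one_apply_eq_self] at this
  simp only [tikhonovResidual, sub_apply, comp_apply, smul_apply, one_apply_eq_self]
  exact sub_eq_iff_eq_add'.mpr this.symm

lemma one_sub_comp_eq_tikhonovResidual (ha : 0 < a) {R : H →L[ℂ] H}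
    (hR : R ∘L (Q + (a : ℂ) • 1) = 1) : 1 - Q ∘L R = tikhonovResidual Q a := by
  have hR_eq : R = Ring.inverse (Q + (a : ℂ) • 1) := by
    simpa using (Ring.eq_mul_inverse_iff_mul_eq R 1 _ (hQ.isUnit_add_smul_one ha)).mpr hR
  rw [hR_eq, hQ.one_sub_comp_inverse ha]

lemma mul_norm_inverse_apply_le (ha : 0 < a) (x : H) :
    a * ‖Ring.inverse (Q + (a : ℂ) • 1) x‖ ≤ ‖x‖ := by
  simpa only [hQ.add_smul_one_apply_inverse_apply ha] using
    hQ.mul_norm_le_norm_add_smul_one_apply a (Ring.inverse (Q + (a : ℂ) • 1) x)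

lemma norm_tikhonovResidual_le (ha : 0 < a) : ‖tikhonovResidual Q a‖ ≤ 1 :=
  opNorm_le_bound _ zero_le_one fun x => by
    rw [one_mul, norm_tikhonovResidual_apply ha.le]
    exact hQ.mul_norm_inverse_apply_le ha x

lemma tikhonovResidual_apply_of_apply_eq_zero (ha : 0 < a) {x : H} (hx : Q x = 0) :
    tikhonovResidual Q a x = x := by
  have hshift : (Q + (a : ℂ) • 1) x = (a : ℂ) • x := by
    rw [add_apply, hx, zero_add, smul_apply, one_apply_eq_self]
  calc tikhonovResidual Q a x = Ring.inverse (Q + (a : ℂ) • 1) ((Q + (a : ℂ) • 1) x) := by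
        rw [hshift, map_smul]; rfl
    _ = x := hQ.inverse_apply_add_smul_one_apply ha x

lemma tikhonovResidual_apply_apply (ha : 0 < a) (w : H) :
    tikhonovResidual Q a (Q w) = (a : ℂ) • (w - tikhonovResidual Q a w) := by
  have hshift : Q w = (Q + (a : ℂ) • 1) w - (a : ℂ) • w := by
    rw [add_apply, smul_apply, one_apply_eq_self, add_sub_cancel_right]
  rw [hshift, tikhonovResidual, smul_apply, smul_apply, map_sub, map_smul,
    hQ.inverse_apply_add_smul_one_apply ha, smul_sub]

lemma tendsto_tikhonovResidual_atTop (x : H) :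
    Tendsto (fun a => tikhonovResidual Q a x) atTop (𝓝 x) := by
  have hbound : ∀ a > 0, ‖tikhonovResidual Q a x - x‖ ≤ ‖Q‖ * ‖x‖ * a⁻¹ := by
    intro a ha
    rw [← hQ.one_sub_comp_inverse ha, sub_apply, one_apply_eq_self, sub_sub_cancel_left,
      norm_neg, comp_apply, mul_assoc, ← div_eq_mul_inv]
    refine (Q.le_opNorm _).trans (mul_le_mul_of_nonneg_left ?_ (norm_nonneg Q))
    rw [le_div_iff₀ ha, mul_comm]
    exact hQ.mul_norm_inverse_apply_le ha x
  rw [tendsto_iff_norm_sub_tendsto_zero]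
  refine squeeze_zero' (.of_forall fun _ => norm_nonneg _)
    ((eventually_gt_atTop 0).mono hbound) ?_
  simpa using tendsto_inv_atTop_zero.const_mul (‖Q‖ * ‖x‖)

lemma tendsto_tikhonovResidual_apply_apply_nhdsGT_zero (w : H) :
    Tendsto (fun a => tikhonovResidual Q a (Q w)) (𝓝[>] 0) (𝓝 0) := by
  have hbound : ∀ a ∈ Ioi (0 : ℝ), ‖tikhonovResidual Q a (Q w)‖ ≤ a * (2 * ‖w‖) := by
    intro a ha
    rw [hQ.tikhonovResidual_apply_apply ha, norm_smul, Complex.norm_real,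
      Real.norm_of_nonneg (le_of_lt ha)]
    refine mul_le_mul_of_nonneg_left ?_ (le_of_lt ha)
    calc ‖w - tikhonovResidual Q a w‖ ≤ ‖w‖ + ‖tikhonovResidual Q a w‖ := norm_sub_le _ _
      _ ≤ 2 * ‖w‖ := by
        linarith [(tikhonovResidual Q a).le_of_opNorm_le (hQ.norm_tikhonovResidual_le ha) w]
  refine squeeze_zero_norm' (eventually_nhdsWithin_of_forall hbound) ?_
  exact ((continuous_id.mul continuous_const).tendsto' 0 0 (zero_mul _)).mono_left
    nhdsWithin_le_nhds

lemma tendsto_tikhonovResidual_nhdsGT_zero (x : H) :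
    Tendsto (fun a => tikhonovResidual Q a x) (𝓝[>] 0) (𝓝 (Q.ker.starProjection x)) := by
  set p := Q.ker.starProjection x
  have hp : Q p = 0 := Q.ker.starProjection_apply_mem x
  have hrange : x - p ∈ closure (range Q) := by
    have := Q.ker.sub_starProjection_mem_orthogonal x
    rwa [orthogonal_ker, hQ.isSelfAdjoint.adjoint_eq] at this
  have hres : Tendsto (fun a => tikhonovResidual Q a (x - p)) (𝓝[>] 0) (𝓝 0) :=
    tendsto_apply_zero_of_mem_closure
      (eventually_nhdsWithin_of_forall fun a ha => hQ.norm_tikhonovResidual_le ha)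
      (forall_mem_range.mpr hQ.tendsto_tikhonovResidual_apply_apply_nhdsGT_zero) hrange
  have hsplit :
      ∀ a ∈ Ioi (0 : ℝ), tikhonovResidual Q a (x - p) + p = tikhonovResidual Q a x := by
    intro a ha
    rw [map_sub, hQ.tikhonovResidual_apply_of_apply_eq_zero ha hp, sub_add_cancel]
  simpa using (hres.add_const p).congr' (eventually_nhdsWithin_of_forall hsplit)

lemma continuousOn_tikhonovResidual : ContinuousOn (tikhonovResidual Q) (Ioi 0) := by
  intro a ha
  have hinv : ContinuousAt Ring.inverse (Q + (a : ℂ) • 1) :=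
    NormedRing.inverse_continuousAt (hQ.isUnit_add_smul_one ha).unit
  have hshift : Continuous fun b : ℝ => Q + (b : ℂ) • (1 : H →L[ℂ] H) := by fun_prop
  exact (Complex.continuous_ofReal.continuousAt.smul
    (hinv.comp (f := fun b : ℝ => Q + (b : ℂ) • 1) hshift.continuousAt)).continuousWithinAt

lemma strictMonoOn_norm_tikhonovResidual_apply {x : H} (hx : Q x ≠ 0) :
    StrictMonoOn (fun a => ‖tikhonovResidual Q a x‖) (Ioi 0) := by
  intro a (ha : 0 < a) b (hb : 0 < b) hab
  set w := Ring.inverse (Q + (a : ℂ) • 1) (Ring.inverse (Q + (b : ℂ) • 1) x)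
  have hwb : (Q + (a : ℂ) • 1) w = Ring.inverse (Q + (b : ℂ) • 1) x :=
    hQ.add_smul_one_apply_inverse_apply ha _
  have hwa : (Q + (b : ℂ) • 1) w = Ring.inverse (Q + (a : ℂ) • 1) x := by
    have hcomm : (Q + (a : ℂ) • 1) ((Q + (b : ℂ) • 1) w)
        = (Q + (b : ℂ) • 1) ((Q + (a : ℂ) • 1) w) := by
      simp only [add_apply, smul_apply, one_apply_eq_self, map_add, map_smul]
      module
    rw [← hQ.inverse_apply_add_smul_one_apply ha ((Q + (b : ℂ) • 1) w), hcomm, hwb,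
      hQ.add_smul_one_apply_inverse_apply hb]
  have hQw : Q w ≠ 0 := by
    contrapose! hx
    have hshift : ∀ c : ℝ, (Q + (c : ℂ) • 1) w = (c : ℂ) • w := fun c => by
      rw [add_apply, hx, zero_add, smul_apply, one_apply_eq_self]
    rw [← hQ.add_smul_one_apply_inverse_apply hb x, ← hwb, hshift a, map_smul, hshift b,
      map_smul, map_smul, hx, smul_zero, smul_zero]
  have hre : 0 ≤ (inner ℂ (Q w) w).re := hQ.re_inner_nonneg_left w
  have hsq : ‖tikhonovResidual Q a x‖ ^ 2 < ‖tikhonovResidual Q b x‖ ^ 2 := by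
    rw [norm_tikhonovResidual_apply ha.le, norm_tikhonovResidual_apply hb.le, ← hwa, ← hwb,
      mul_pow, mul_pow, norm_add_smul_one_apply_sq, norm_add_smul_one_apply_sq]
    have hQw' : 0 < ‖Q w‖ ^ 2 := by positivity
    nlinarith [mul_pos (mul_pos (sub_pos.mpr hab) (add_pos ha hb)) hQw',
      mul_nonneg (mul_nonneg (mul_pos ha hb).le (sub_pos.mpr hab).le) hre]
  exact lt_of_pow_lt_pow_left₀ 2 (norm_nonneg _) hsq

end ContinuousLinearMap.IsPositive

end Tikhonov

theorem discrepancy_equation_unique_solution_general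
    {H : Type*} [NormedAddCommGroup H] [InnerProductSpace ℂ H] [CompleteSpace H]
    (A : H →L[ℂ] H)
    (Q : H →L[ℂ] H) (hQ : Q = A ∘L adjoint A)
    (y f fδ : H) (hf : f = A y)
    (δ : ℝ) (hδ : 0 < δ) (hnoise : ‖fδ - f‖ ≤ δ)
    (C : ℝ) (hC : 1 < C ∧ C < 2) (hfδ : C * δ < ‖fδ‖)
    (P : H →L[ℂ] H)
    (hP : ∀ x : H, (adjoint A) (P x) = 0 ∧
      ∀ v : H, (adjoint A) v = 0 → (inner ℂ v (x - P x) : ℂ) = 0)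
    (Cinv : ℝ → H →L[ℂ] H)
    (hCinv : ∀ a : ℝ, 0 < a →
      Cinv a ∘L (Q + (a : ℂ) • 1) = 1 ∧ (Q + (a : ℂ) • 1) ∘L Cinv a = 1)
    (h : ℝ → ℝ)
    (hh : ∀ a : ℝ, 0 < a → h a = ‖(Q ∘L Cinv a - 1) fδ‖) :
    ContinuousOn h (Set.Ioi 0) ∧
    MonotoneOn h (Set.Ioi 0) ∧
    Tendsto h atTop (𝓝 ‖fδ‖) ∧
    Tendsto h (𝓝[>] 0) (𝓝 ‖P fδ‖) ∧
    ‖P fδ‖ ≤ δ ∧ δ < C * δ ∧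
    ∃! a : ℝ, 0 < a ∧ h a = C * δ := by
  have hQpos : Q.IsPositive := hQ ▸ isPositive_self_comp_adjoint A
  have hker : Q.ker = (adjoint A).ker := hQ ▸ ker_self_comp_adjoint A
  have hPproj (x : H) : P x = Q.ker.starProjection x := by
    refine (Submodule.eq_starProjection_of_mem_of_inner_eq_zero ?_ fun v hv => ?_).symm
    · rw [hker]; exact (hP x).1
    · rw [hker] at hv; exact inner_eq_zero_symm.mp ((hP x).2 v hv)
  have hPfδ : ‖P fδ‖ ≤ δ := by
    rw [hPproj]
    exact (A.norm_starProjection_le_norm_sub_apply hker.le fδ y).trans (hf ▸ hnoise)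
  have hδC : δ < C * δ := lt_mul_of_one_lt_left hδ hC.1
  have hQfδ : Q fδ ≠ 0 := fun h0 => by
    rw [hPproj, Submodule.starProjection_eq_self_iff.mpr h0] at hPfδ
    linarith
  have hres : EqOn (fun a => ‖tikhonovResidual Q a fδ‖) h (Ioi 0) := fun a ha => by
    simp only [hh a ha, ← hQpos.one_sub_comp_eq_tikhonovResidual ha (hCinv a ha).1, sub_apply,
      norm_sub_rev]
  have hmono := (hQpos.strictMonoOn_norm_tikhonovResidual_apply hQfδ).congr hres
  have h₀ : Tendsto h (𝓝[>] 0) (𝓝 ‖P fδ‖) := by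
    rw [hPproj]
    exact (hQpos.tendsto_tikhonovResidual_nhdsGT_zero fδ).norm.congr'
      (eventually_nhdsWithin_of_forall hres)
  have h₁ : Tendsto h atTop (𝓝 ‖fδ‖) :=
    (hQpos.tendsto_tikhonovResidual_atTop fδ).norm.congr'
      ((eventually_gt_atTop 0).mono fun a ha => hres ha)
  have hcont : ContinuousOn h (Ioi 0) :=
    ((hQpos.continuousOn_tikhonovResidual.clm_apply continuousOn_const).norm).congr
      fun a ha => (hres ha).symm
  exact ⟨hcont, hmono.monotoneOn, h₁, h₀, hPfδ, hδC,
    existsUnique_pos_eq_of_strictMonoOn hcont hmono h₀ h₁ ⟨hPfδ.trans_lt hδC, hfδ⟩⟩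

/-- The discrepancy function `h(a,δ) = ‖(Q(Q+aI)⁻¹ − I) f_δ‖` is continuous and monotone
increasing in `a > 0`, tends to `‖f_δ‖ > Cδ` as `a → ∞` and to `‖P_{N(A*)} f_δ‖ ≤ δ < Cδ`
as `a → 0⁺`; hence `h(a,δ) = Cδ` has a unique solution `a(δ) > 0`. -/
theorem discrepancy_equation_unique_solution
    {H : Type*} [NormedAddCommGroup H] [InnerProductSpace ℂ H] [CompleteSpace H]
    (A : H →L[ℂ] H) (hdense : DenseRange A)
    (Q : H →L[ℂ] H) (hQ : Q = A ∘L adjoint A)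
    (y f fδ : H) (hf : f = A y)
    (δ : ℝ) (hδ : 0 < δ) (hnoise : ‖fδ - f‖ ≤ δ)
    (C : ℝ) (hC : 1 < C ∧ C < 2) (hfδ : C * δ < ‖fδ‖)
    (P : H →L[ℂ] H)
    (hP : ∀ x : H, (adjoint A) (P x) = 0 ∧
      ∀ v : H, (adjoint A) v = 0 → (inner ℂ v (x - P x) : ℂ) = 0)
    (Cinv : ℝ → H →L[ℂ] H)
    (hCinv : ∀ a : ℝ, 0 < a →
      Cinv a ∘L (Q + (a : ℂ) • 1) = 1 ∧ (Q + (a : ℂ) • 1) ∘L Cinv a = 1)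
    (h : ℝ → ℝ)
    (hh : ∀ a : ℝ, 0 < a → h a = ‖(Q ∘L Cinv a - 1) fδ‖) :
    ContinuousOn h (Set.Ioi 0) ∧
    MonotoneOn h (Set.Ioi 0) ∧
    Tendsto h atTop (𝓝 ‖fδ‖) ∧
    Tendsto h (𝓝[>] 0) (𝓝 ‖P fδ‖) ∧
    ‖P fδ‖ ≤ δ ∧ δ < C * δ ∧
    ∃! a : ℝ, 0 < a ∧ h a = C * δ :=
  discrepancy_equation_unique_solution_general A Q hQ y f fδ hf δ hδ hnoise C hC hfδ P hP Cinv hCinv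
    h hh
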